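/- (Coercivity of F) Let ρ > 0, β > 0, and D ∈ ℝ^{d×n} of full row rank d. Define g_ρ(G) = sup { ⟨G, V⟩ − (ρ/2)‖V‖_F² : ‖V‖₁ ≤ 1 } on n×n matrices, and F(M, P) = g_ρ(MᵀM − I) + (1/(2β))‖M − P D‖_F² for M ∈ ℝ^{m×n}, P ∈ ℝ^{m×d}. Then F is bounded below and coercive: F(M_j, P_j) → +∞ along any sequence with ‖M_j‖_F² + ‖P_j‖_F² → +∞. -/
import Mathlib


open Matrix Filter

/-- The entrywise ℓ₁-norm `‖V‖₁ = Σ_{i,j} |v_{ij}|`. -/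
noncomputable def l1Norm {n : ℕ} (V : Matrix (Fin n) (Fin n) ℝ) : ℝ :=
  ∑ i, ∑ j, |V i j|

/-- The Frobenius inner product `⟨A, B⟩ = Σ_{i,j} a_{ij} b_{ij}`. -/
noncomputable def finner {n : ℕ} (A B : Matrix (Fin n) (Fin n) ℝ) : ℝ :=
  ∑ i, ∑ j, A i j * B i j

/-- The squared Frobenius norm `‖V‖_F²` of an m×n matrix. -/
noncomputable def frobSq {m n : ℕ} (V : Matrix (Fin m) (Fin n) ℝ) : ℝ :=
  ∑ i, ∑ j, V i j ^ 2

/-- The smoothed infinity norm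
`g_ρ(G) = sup { ⟨G, V⟩ − (ρ/2)‖V‖_F² : ‖V‖₁ ≤ 1 }`. -/
noncomputable def gRho {n : ℕ} (ρ : ℝ) (G : Matrix (Fin n) (Fin n) ℝ) : ℝ :=
  sSup {x : ℝ | ∃ V : Matrix (Fin n) (Fin n) ℝ, l1Norm V ≤ 1 ∧
    x = finner G V - ρ / 2 * frobSq V}

lemma frobSq_nonneg {m n : ℕ} (V : Matrix (Fin m) (Fin n) ℝ) : 0 ≤ frobSq V := by
  refine Finset.sum_nonneg fun i _ => Finset.sum_nonneg fun j _ => sq_nonneg _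

lemma gRho_bddAbove {n : ℕ} {ρ : ℝ} (hρ : 0 ≤ ρ) (G : Matrix (Fin n) (Fin n) ℝ) :
    BddAbove {x : ℝ | ∃ V : Matrix (Fin n) (Fin n) ℝ, l1Norm V ≤ 1 ∧
      x = finner G V - ρ / 2 * frobSq V} := by
  refine ⟨∑ i, ∑ j, |G i j|, ?_⟩
  rintro x ⟨V, hV, rfl⟩
  have habs : ∀ i j, |V i j| ≤ 1 := by
    intro i j
    refine le_trans ?_ hV
    calc |V i j| ≤ ∑ j', |V i j'| :=
          Finset.single_le_sum (f := fun j' => |V i j'|) (fun _ _ => abs_nonneg _)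
            (Finset.mem_univ j)
      _ ≤ l1Norm V :=
          Finset.single_le_sum (f := fun i' => ∑ j', |V i' j'|)
            (fun _ _ => Finset.sum_nonneg fun _ _ => abs_nonneg _) (Finset.mem_univ i)
  have h1 : finner G V ≤ ∑ i, ∑ j, |G i j| := by
    refine Finset.sum_le_sum fun i _ => Finset.sum_le_sum fun j _ => ?_
    calc G i j * V i j ≤ |G i j * V i j| := le_abs_self _
      _ = |G i j| * |V i j| := abs_mul _ _
      _ ≤ |G i j| * 1 := mul_le_mul_of_nonneg_left (habs i j) (abs_nonneg _)
      _ = |G i j| := mul_one _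
  have h2 : 0 ≤ ρ / 2 * frobSq V := mul_nonneg (by linarith) (frobSq_nonneg V)
  linarith

lemma gRho_ge {n : ℕ} {ρ : ℝ} (hρ : 0 ≤ ρ) (G V : Matrix (Fin n) (Fin n) ℝ)
    (hV : l1Norm V ≤ 1) : finner G V - ρ / 2 * frobSq V ≤ gRho ρ G :=
  le_csSup (gRho_bddAbove hρ G) ⟨V, hV, rfl⟩

lemma gRho_nonneg {n : ℕ} {ρ : ℝ} (hρ : 0 ≤ ρ) (G : Matrix (Fin n) (Fin n) ℝ) :
    0 ≤ gRho ρ G := by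
  have := gRho_ge hρ G 0 (by simp [l1Norm])
  simpa [finner, frobSq] using this

lemma gRho_ge_diag {n : ℕ} {ρ : ℝ} (hρ : 0 ≤ ρ) (G : Matrix (Fin n) (Fin n) ℝ)
    (j₀ : Fin n) : G j₀ j₀ - ρ / 2 ≤ gRho ρ G := by
  have key : ∀ c : ℝ, (∑ i, ∑ j, (if i = j₀ ∧ j = j₀ then c else 0)) = c := by
    intro c
    rw [Finset.sum_eq_single j₀, Finset.sum_eq_single j₀] <;> simp +contextual
  set V : Matrix (Fin n) (Fin n) ℝ := fun i j => if i = j₀ ∧ j = j₀ then (1:ℝ) else 0 with hVdef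
  have hV : l1Norm V ≤ 1 := by
    unfold l1Norm
    have : ∀ i j, |V i j| = if i = j₀ ∧ j = j₀ then (1:ℝ) else 0 := by
      intro i j; simp only [hVdef]; split <;> simp
    simp only [this, key, le_refl]
  have h1 : finner G V = G j₀ j₀ := by
    unfold finner
    have : ∀ i j, G i j * V i j = if i = j₀ ∧ j = j₀ then G j₀ j₀ else 0 := by
      intro i j; simp only [hVdef]
      split
      · rename_i h; rw [h.1, h.2]; ring
      · simp
    simp only [this, key]
  have h2 : frobSq V = 1 := by
    unfold frobSq
    have : ∀ i j, V i j ^ 2 = if i = j₀ ∧ j = j₀ then (1:ℝ) else 0 := by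
      intro i j; simp only [hVdef]; split <;> simp
    simp only [this, key]
  have := gRho_ge hρ G V hV
  rw [h1, h2] at this
  linarith

lemma frobSq_mul_le {m n k : ℕ} (A : Matrix (Fin m) (Fin n) ℝ)
    (B : Matrix (Fin n) (Fin k) ℝ) : frobSq (A * B) ≤ frobSq A * frobSq B := by
  unfold frobSq
  calc ∑ i, ∑ l, (A * B) i l ^ 2
      ≤ ∑ i, ∑ l, (∑ j, A i j ^ 2) * (∑ j, B j l ^ 2) := by
        refine Finset.sum_le_sum fun i _ => Finset.sum_le_sum fun l _ => ?_
        rw [Matrix.mul_apply]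
        exact Finset.sum_mul_sq_le_sq_mul_sq Finset.univ (fun j => A i j) (fun j => B j l)
    _ = (∑ i, ∑ j, A i j ^ 2) * (∑ j, ∑ l, B j l ^ 2) := by
        have h : (∑ j : Fin n, ∑ l : Fin k, B j l ^ 2) = ∑ l, ∑ j, B j l ^ 2 :=
          Finset.sum_comm
        rw [h, Finset.sum_mul_sum]

lemma frobSq_sub_bound {m n : ℕ} (M Q : Matrix (Fin m) (Fin n) ℝ) :
    frobSq Q ≤ 2 * frobSq M + 2 * frobSq (M - Q) := by
  unfold frobSq
  rw [Finset.mul_sum, Finset.mul_sum, ← Finset.sum_add_distrib]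
  refine Finset.sum_le_sum fun i _ => ?_
  rw [Finset.mul_sum, Finset.mul_sum, ← Finset.sum_add_distrib]
  refine Finset.sum_le_sum fun j _ => ?_
  have : (M - Q) i j = M i j - Q i j := rfl
  rw [this]; nlinarith [sq_nonneg (2 * M i j - Q i j)]

lemma key_ineq {m n d : ℕ} (ρ β : ℝ) (hρ : 0 < ρ) (hβ : 0 < β) (hn : 0 < n)
    (D : Matrix (Fin d) (Fin n) ℝ) (hD : IsUnit (D * Dᵀ)) :
    ∃ a : ℝ, 0 < a ∧ ∀ (M : Matrix (Fin m) (Fin n) ℝ) (P : Matrix (Fin m) (Fin d) ℝ),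
      a * (frobSq M + frobSq P) - (1 + ρ / 2) ≤
        gRho ρ (Mᵀ * M - 1) + 1 / (2 * β) * frobSq (M - P * D) := by
  set E : Matrix (Fin n) (Fin d) ℝ := Dᵀ * (D * Dᵀ)⁻¹ with hE
  set K : ℝ := frobSq E with hKdef
  have hK : 0 ≤ K := frobSq_nonneg E
  have hnR : (0:ℝ) < n := by exact_mod_cast hn
  set ε : ℝ := min (1 / (n:ℝ)) (1 / (2 * β)) with hεdef
  have hε : 0 < ε := lt_min (by positivity) (by positivity)
  have hεn : ε ≤ 1 / (n:ℝ) := min_le_left _ _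
  have hεβ : ε ≤ 1 / (2 * β) := min_le_right _ _
  have h1K : (0:ℝ) < 1 + 2 * K := by linarith
  refine ⟨ε / (1 + 2 * K), by positivity, fun M P => ?_⟩
  have hDE : D * E = 1 := by
    rw [hE, ← Matrix.mul_assoc]
    exact Matrix.mul_nonsing_inv _ ((Matrix.isUnit_iff_isUnit_det _).mp hD)
  have hP : P = P * D * E := by rw [Matrix.mul_assoc, hDE, Matrix.mul_one]
  set x : ℝ := frobSq M with hx
  set y : ℝ := frobSq (M - P * D) with hy
  set p : ℝ := frobSq P with hp
  have hx0 : 0 ≤ x := frobSq_nonneg M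
  have hy0 : 0 ≤ y := frobSq_nonneg _
  have h2 : p ≤ frobSq (P * D) * K := by
    rw [hp]; conv_lhs => rw [hP]
    exact frobSq_mul_le _ _
  have h3 : frobSq (P * D) ≤ 2 * x + 2 * y := frobSq_sub_bound M (P * D)
  -- column bound
  have hsum : x = ∑ j, ∑ i, M i j ^ 2 := Finset.sum_comm
  have hcol : ∃ j₀ : Fin n, x / n ≤ ∑ i, M i j₀ ^ 2 := by
    by_contra h
    push_neg at h
    have : ∑ j, ∑ i, M i j ^ 2 < ∑ _j : Fin n, x / n :=
      Finset.sum_lt_sum_of_nonempty (Finset.univ_nonempty_iff.mpr ⟨⟨0, hn⟩⟩)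
        fun j _ => h j
    rw [← hsum, Finset.sum_const, Finset.card_univ, Fintype.card_fin, nsmul_eq_mul,
      mul_div_cancel₀ _ (ne_of_gt hnR)] at this
    exact lt_irrefl _ this
  obtain ⟨j₀, hj₀⟩ := hcol
  have hdiag : (Mᵀ * M - (1 : Matrix (Fin n) (Fin n) ℝ)) j₀ j₀ = (∑ i, M i j₀ ^ 2) - 1 := by
    simp [Matrix.sub_apply, Matrix.mul_apply, Matrix.one_apply, sq]
  have h4 := gRho_ge_diag hρ.le (Mᵀ * M - 1) j₀
  rw [hdiag] at h4
  have A4 : x / n - 1 - ρ / 2 ≤ gRho ρ (Mᵀ * M - 1) := by linarith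
  have hxp : x + p ≤ (1 + 2 * K) * (x + y) := by nlinarith
  have A1 : ε / (1 + 2 * K) * (x + p) ≤ ε * x + ε * y := by
    rw [div_mul_eq_mul_div, div_le_iff₀ h1K]
    nlinarith [mul_le_mul_of_nonneg_left hxp hε.le]
  have A2 : ε * x ≤ x / n := by
    have hxn : x / n = (1 / n) * x := by ring
    rw [hxn]
    exact mul_le_mul_of_nonneg_right hεn hx0
  have A3 : ε * y ≤ 1 / (2 * β) * y := mul_le_mul_of_nonneg_right hεβ hy0
  linarith

/-- coercivity of F: with
`F(M,P) = g_ρ(MᵀM − I) + (1/(2β))‖M − PD‖_F²` and `D` of full row rank, `F` is bounded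
below, and `F(M_j,P_j) → +∞` along any sequence with `‖M_j‖_F² + ‖P_j‖_F² → +∞`. -/
theorem stmt_17 {m n d : ℕ} (ρ β : ℝ) (hρ : 0 < ρ) (hβ : 0 < β)
    (D : Matrix (Fin d) (Fin n) ℝ) (hD : IsUnit (D * Dᵀ)) :
    (∃ c : ℝ, ∀ (M : Matrix (Fin m) (Fin n) ℝ) (P : Matrix (Fin m) (Fin d) ℝ),
      c ≤ gRho ρ (Mᵀ * M - 1) + 1 / (2 * β) * frobSq (M - P * D)) ∧
    (∀ (Ms : ℕ → Matrix (Fin m) (Fin n) ℝ) (Ps : ℕ → Matrix (Fin m) (Fin d) ℝ),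
      Tendsto (fun j => frobSq (Ms j) + frobSq (Ps j)) atTop atTop →
      Tendsto (fun j => gRho ρ ((Ms j)ᵀ * Ms j - 1)
        + 1 / (2 * β) * frobSq (Ms j - Ps j * D)) atTop atTop) := by
  constructor
  · refine ⟨0, fun M P => ?_⟩
    have h1 := gRho_nonneg hρ.le (Mᵀ * M - 1)
    have h2 := frobSq_nonneg (M - P * D)
    have h3 : 0 ≤ 1 / (2 * β) * frobSq (M - P * D) := by positivity
    linarith
  · intro Ms Ps h
    rcases Nat.eq_zero_or_pos n with hn | hn
    · exfalso
      subst hn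
      have hD0 : D * Dᵀ = 0 := by ext i k; simp [Matrix.mul_apply]
      rw [hD0] at hD
      rcases Nat.eq_zero_or_pos d with hd | hd
      · subst hd
        obtain ⟨j, hj⟩ := (h.eventually_gt_atTop 0).exists
        have hz : frobSq (Ms j) + frobSq (Ps j) = 0 := by simp [frobSq]
        rw [hz] at hj
        exact lt_irrefl _ hj
      · have h01 := isUnit_zero_iff.mp hD
        have := congrFun (congrFun h01 ⟨0, hd⟩) ⟨0, hd⟩
        simp [Matrix.one_apply] at this
    · obtain ⟨a, ha, hkey⟩ := key_ineq (m := m) ρ β hρ hβ hn D hD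
      have h1 : Tendsto (fun j => a * (frobSq (Ms j) + frobSq (Ps j)) - (1 + ρ / 2))
          atTop atTop := by
        have := tendsto_atTop_add_const_right atTop (-(1 + ρ / 2)) (h.const_mul_atTop ha)
        simpa [sub_eq_add_neg] using this
      exact tendsto_atTop_mono (fun j => hkey (Ms j) (Ps j)) h1
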